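/- Li₂(1/9) = 6·Li₂(1/3) + (log 3)² − π²/3. -/

import Mathlib

/-!
Two functional equations of the dilogarithm suffice. The duplication formula
`Li₂(x²) = 2 (Li₂ x + Li₂ (-x))` comes from splitting the series into even and odd terms.
Landen's identity `Li₂ x + Li₂ (x / (x - 1)) = -½ log² (1 - x)` holds because both sides vanish
at `0` and have the same derivative, by `Li₂' x = -log (1 - x) / x`. Duplication at `1, 1/2, 1/3`,
Landen at `1/2, 1/3, 1/4` and `Li₂ 1 = ζ 2 = π² / 6` are seven linear relations among the values
of `Li₂` at `±1, ±1/2, ±1/3, 1/4, 1/9`, and eliminating all but `Li₂ (1/9)` and `Li₂ (1/3)` gives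
the result.
-/

open Real Set

noncomputable def Li (s : ℕ) (w : ℝ) : ℝ := ∑' n : ℕ, w ^ (n + 1) / ((n:ℝ) + 1) ^ s

lemma summable_one_div_nat_add_one_sq : Summable (fun n : ℕ => 1 / ((n : ℝ) + 1) ^ 2) := by
  exact_mod_cast (summable_nat_add_iff 1).2 hasSum_zeta_two.summable

lemma norm_pow_div_sq_le {x : ℝ} (hx : |x| ≤ 1) (n : ℕ) :
    ‖x ^ (n + 1) / ((n : ℝ) + 1) ^ 2‖ ≤ 1 / ((n : ℝ) + 1) ^ 2 := by
  rw [norm_div, norm_pow, Real.norm_eq_abs, norm_of_nonneg (by positivity)]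
  gcongr
  exact pow_le_one₀ (abs_nonneg x) hx

lemma hasSum_Li_two {x : ℝ} (hx : |x| ≤ 1) :
    HasSum (fun n : ℕ => x ^ (n + 1) / ((n : ℝ) + 1) ^ 2) (Li 2 x) :=
  (summable_one_div_nat_add_one_sq.of_norm_bounded (norm_pow_div_sq_le hx)).hasSum

lemma Li_two_zero : Li 2 0 = 0 := by
  simp [Li]

lemma Li_two_one : Li 2 1 = π ^ 2 / 6 := by
  have h := (hasSum_nat_add_iff' 1).2 hasSum_zeta_two
  simp only [Finset.range_one, Finset.sum_singleton, Nat.cast_zero, zero_pow two_ne_zero,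
    div_zero, sub_zero, Nat.cast_add, Nat.cast_one] at h
  simpa [Li] using h.tsum_eq

lemma continuousOn_Li_two : ContinuousOn (Li 2) (Icc (-1) 1) :=
  continuousOn_tsum (fun n => (continuous_pow (n + 1)).div_const _ |>.continuousOn)
    summable_one_div_nat_add_one_sq fun n _ hx => norm_pow_div_sq_le (abs_le.2 hx) n

lemma Li_two_sq {x : ℝ} (hx : |x| ≤ 1) : Li 2 (x ^ 2) = 2 * (Li 2 x + Li 2 (-x)) := by
  have hsum := (hasSum_Li_two hx).add (hasSum_Li_two (x := -x) (by rwa [abs_neg]))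
  have heven : HasSum (fun k : ℕ => x ^ (2 * k + 1) / ((2 * k : ℕ) + 1 : ℝ) ^ 2
      + (-x) ^ (2 * k + 1) / ((2 * k : ℕ) + 1 : ℝ) ^ 2) 0 := by
    simp [Odd.neg_pow (odd_two_mul_add_one _), neg_div]
  have hodd : HasSum (fun k : ℕ => x ^ (2 * k + 1 + 1) / ((2 * k + 1 : ℕ) + 1 : ℝ) ^ 2
      + (-x) ^ (2 * k + 1 + 1) / ((2 * k + 1 : ℕ) + 1 : ℝ) ^ 2) (Li 2 (x ^ 2) / 2) := by
    refine ((hasSum_Li_two (x := x ^ 2) ?_).div_const 2).congr_fun fun k => ?_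
    · rw [abs_pow]
      exact pow_le_one₀ (abs_nonneg x) hx
    have hk : (k : ℝ) + 1 ≠ 0 := by positivity
    rw [show 2 * k + 1 + 1 = 2 * (k + 1) by ring, pow_mul, pow_mul, neg_sq]
    push_cast
    field_simp
    ring
  have := hsum.unique (heven.even_add_odd hodd)
  linarith

lemma hasSum_pow_div_nat_add_one {x : ℝ} (hx : |x| < 1) (hx₀ : x ≠ 0) :
    HasSum (fun n : ℕ => x ^ n / ((n : ℝ) + 1)) (-log (1 - x) / x) := by
  refine ((hasSum_pow_div_log_of_abs_lt_one hx).div_const x).congr_fun fun n => ?_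
  field_simp
  ring

lemma hasDerivAt_Li_two {x : ℝ} (hx : |x| < 1) (hx₀ : x ≠ 0) :
    HasDerivAt (Li 2) (-log (1 - x) / x) x := by
  obtain ⟨r, hxr, hr⟩ := exists_between hx
  rw [← (hasSum_pow_div_nat_add_one hx hx₀).tsum_eq]
  change HasDerivAt (fun y => ∑' n : ℕ, y ^ (n + 1) / ((n : ℝ) + 1) ^ 2) _ x
  refine hasDerivAt_tsum_of_isPreconnected (u := fun n : ℕ => r ^ n) (y₀ := 0)
    (g' := fun n y => y ^ n / ((n : ℝ) + 1))
    (summable_geometric_of_lt_one ((abs_nonneg x).trans hxr.le) hr) isOpen_Ioo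
    isPreconnected_Ioo (fun n y _ => ?_) (fun n y hy => ?_) ?_ ?_
    (abs_lt.1 hxr)
  · refine ((hasDerivAt_pow (n + 1) y).div_const (((n : ℝ) + 1) ^ 2)).congr_deriv ?_
    push_cast
    field_simp
  · rw [norm_div, norm_pow, Real.norm_eq_abs, norm_of_nonneg (by positivity)]
    calc |y| ^ n / ((n : ℝ) + 1) ≤ |y| ^ n :=
          div_le_self (by positivity) (le_add_of_nonneg_left n.cast_nonneg)
      _ ≤ r ^ n := pow_le_pow_left₀ (abs_nonneg y) (abs_le.2 ⟨hy.1.le, hy.2.le⟩) n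
  · have hr₀ : 0 < r := (abs_nonneg x).trans_lt hxr
    constructor <;> linarith
  · simp

lemma hasDerivAt_landen {t : ℝ} (ht₁ : -1 < t) (ht₂ : t < 1 / 2) (ht₀ : t ≠ 0) :
    HasDerivAt (fun s => Li 2 s + Li 2 (-s / (1 - s)) + log (1 - s) ^ 2 / 2) 0 t := by
  have hpos : 0 < 1 - t := by linarith
  have hLi := hasDerivAt_Li_two (abs_lt.2 ⟨ht₁, by linarith⟩) ht₀
  have hmoebius : HasDerivAt (fun s => -s / (1 - s)) (-1 / (1 - t) ^ 2) t := by
    refine ((hasDerivAt_id t).neg.div ((hasDerivAt_id t).const_sub 1) hpos.ne').congr_deriv ?_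
    simp only [Pi.neg_apply, id]
    field_simp
    ring
  have hv : |-t / (1 - t)| < 1 := by
    rw [abs_div, abs_neg, abs_of_pos hpos, div_lt_one hpos, abs_lt]
    constructor <;> linarith
  have hLi_comp :=
    (hasDerivAt_Li_two hv (div_ne_zero (neg_ne_zero.2 ht₀) hpos.ne')).comp t hmoebius
  have hlog := (((hasDerivAt_id t).const_sub 1).log hpos.ne').pow 2 |>.div_const 2
  refine ((hLi.add hLi_comp).add hlog).congr_deriv ?_
  have h1v : 1 - -t / (1 - t) = (1 - t)⁻¹ := by
    field_simp
    ring
  simp only [h1v, log_inv, id]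
  field_simp
  ring

lemma continuousOn_landen :
    ContinuousOn (fun s => Li 2 s + Li 2 (-s / (1 - s)) + log (1 - s) ^ 2 / 2)
      (Icc (-1) (1 / 2)) := by
  have hpos : ∀ s ∈ Icc (-1 : ℝ) (1 / 2), 1 - s ≠ 0 := fun s hs => by linarith [hs.2]
  have hmaps : MapsTo (fun s : ℝ => -s / (1 - s)) (Icc (-1) (1 / 2)) (Icc (-1) 1) := by
    intro s ⟨hs₁, hs₂⟩
    have : 0 < 1 - s := by linarith
    rw [mem_Icc, le_div_iff₀ this, div_le_iff₀ this]
    constructor <;> linarith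
  refine ((continuousOn_Li_two.mono fun s hs => ⟨hs.1, by linarith [hs.2]⟩).add
    (continuousOn_Li_two.comp
      (continuousOn_id.neg.div (continuousOn_const.sub continuousOn_id) hpos) hmaps)).add ?_
  exact ((continuousOn_const.sub continuousOn_id).log hpos).pow 2 |>.div_const 2

lemma eq_of_hasDerivAt_zero {f : ℝ → ℝ} {a b : ℝ} (hab : a ≤ b) (hf : ContinuousOn f (Icc a b))
    (hf' : ∀ t ∈ Ioo a b, HasDerivAt f 0 t) : f a = f b := by
  rcases hab.eq_or_lt with rfl | hab
  · rfl
  obtain ⟨c, -, hc⟩ := exists_hasDerivAt_eq_slope f (fun _ => 0) hab hf hf'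
  rw [eq_comm, div_eq_zero_iff, sub_eq_zero, sub_eq_zero] at hc
  exact hc.elim Eq.symm fun h => absurd h hab.ne'

theorem Li_two_add_Li_two_neg_div_one_sub {x : ℝ} (hx₁ : -1 ≤ x) (hx₂ : x ≤ 1 / 2) :
    Li 2 x + Li 2 (-x / (1 - x)) = -log (1 - x) ^ 2 / 2 := by
  set G := fun s => Li 2 s + Li 2 (-s / (1 - s)) + log (1 - s) ^ 2 / 2
  suffices G x = G 0 by
    simp only [G, Li_two_zero, neg_zero, zero_div, sub_zero, log_one] at this
    linarith
  rcases le_total x 0 with hx | hx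
  · refine eq_of_hasDerivAt_zero hx (continuousOn_landen.mono (Icc_subset_Icc hx₁ (by norm_num)))
      fun t ht => hasDerivAt_landen (by linarith [ht.1]) (by linarith [ht.2]) ht.2.ne
  · refine (eq_of_hasDerivAt_zero hx (continuousOn_landen.mono (Icc_subset_Icc (by norm_num) hx₂))
      fun t ht => hasDerivAt_landen (by linarith [ht.1]) (by linarith [ht.2]) ht.1.ne').symm

theorem Li2_ninth :
    Li 2 (1/9) = 6 * Li 2 (1/3) + (Real.log 3) ^ 2 - Real.pi ^ 2 / 3 := by
  have d₁ := Li_two_sq (x := 1) (by norm_num)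
  have d₂ := Li_two_sq (x := 1 / 2) (by norm_num [abs_of_pos])
  have d₃ := Li_two_sq (x := 1 / 3) (by norm_num [abs_of_pos])
  have l₁ := Li_two_add_Li_two_neg_div_one_sub (x := 1 / 2) (by norm_num) (by norm_num)
  have l₂ := Li_two_add_Li_two_neg_div_one_sub (x := 1 / 3) (by norm_num) (by norm_num)
  have l₃ := Li_two_add_Li_two_neg_div_one_sub (x := 1 / 4) (by norm_num) (by norm_num)
  have h2 : log 4 = 2 * log 2 := by
    rw [show (4 : ℝ) = 2 ^ 2 by norm_num, log_pow, Nat.cast_ofNat]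
  norm_num [log_div, h2] at d₁ d₂ d₃ l₁ l₂ l₃
  linear_combination d₃ + 2 * l₃ - 2 * d₂ - 4 * l₂ - 4 * l₁ - 2 * d₁ - 2 * Li_two_one
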